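/- For every $r \in \mathbb{N}$ and $d \ge 1$, the following combinatorial identity holds: $\sum_{k \in \mathbb{N}_0^d, \|k\|_1 \le r} \prod_{i=1}^{d+1} \binom{2k_i}{k_i} = \binom{r + \frac{d-1}{2}}{r} 4^r$, where $k_{d+1} := r - \|k\|_1$ and the generalized binomial coefficient is interpreted via the Gamma function as $\binom{r + (d-1)/2}{r} = \frac{\Gamma(r + (d+1)/2)}{\Gamma(r+1)\Gamma((d+1)/2)}$. -/

import Mathlib

open MeasureTheory Finset

/-- The d-dimensional unit simplex. -/
def simplexSet (d : ℕ) : Set (Fin d → ℝ) :=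
  {x | (∀ i, 0 ≤ x i ∧ x i ≤ 1) ∧ ∑ i, x i ≤ 1}

/-- The lattice points of the discrete simplex `ℕ₀^d ∩ mS`. -/
def grid (d m : ℕ) : Finset (Fin d → ℕ) :=
  (Finset.Icc 0 (fun _ => m)).filter (fun k => ∑ i, k i ≤ m)

/-- Multinomial(m, x) probability mass at k. -/
noncomputable def Pw (d m : ℕ) (k : Fin d → ℕ) (x : Fin d → ℝ) : ℝ :=
  ((m.factorial : ℝ) / ((m - ∑ i, k i).factorial * ∏ i, (k i).factorial)) *
    (1 - ∑ i, x i) ^ (m - ∑ i, k i) * ∏ i, x i ^ k i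

/-!
`C(2n, n) = 4ⁿ · multichoose (1/2) n` is the coefficient of `xⁿ` in `(1 - 4x)^(-1/2)`, so the sum
over the discrete simplex is the `r`-th coefficient of the `(d + 1)`-st power of that series,
namely `4ʳ · multichoose ((d + 1)/2) r`; coefficientwise this is the Chu–Vandermonde identity
`multichoose (b + c) n = ∑ multichoose b i * multichoose c j`, applied `d` times. The Gamma
quotient is the same coefficient because `Γ(c + n) = c (c + 1) ⋯ (c + n - 1) Γ(c)`.
-/

namespace Ring

theorem multichoose_add {R : Type*} [CommRing R] [BinomialRing R] (b c : R) (n : ℕ) :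
    multichoose (b + c) n = ∑ p ∈ antidiagonal n, multichoose b p.1 * multichoose c p.2 := by
  -- `choose (-r) n = (-1)ⁿ • multichoose r n` turns Chu–Vandermonde for `choose` into this.
  have h := add_choose_eq (r := -b) (s := -c) n (Commute.all _ _)
  rw [← neg_add, choose_neg'] at h
  simp only [choose_neg', smul_mul_smul_comm, ← Int.negOnePow_add] at h
  rw [sum_congr rfl fun p hp => by rw [← Nat.cast_add, mem_antidiagonal.mp hp], ← smul_sum] at h
  exact (Int.negOnePow n).isUnit.smul_left_cancel.mp h

theorem pow_mul_multichoose_add {R : Type*} [CommRing R] [BinomialRing R] (x b c : R) (n : ℕ) :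
    x ^ n * multichoose (b + c) n =
      ∑ p ∈ antidiagonal n, x ^ p.1 * multichoose b p.1 * (x ^ p.2 * multichoose c p.2) := by
  rw [multichoose_add, mul_sum]
  refine sum_congr rfl fun p hp => ?_
  rw [← mem_antidiagonal.mp hp, pow_add]
  ring

theorem factorial_mul_multichoose {K : Type*} [Field K] [CharZero K] (r : K) (n : ℕ) :
    n.factorial * multichoose r n = (ascPochhammer K n).eval r := by
  rw [← nsmul_eq_mul, factorial_nsmul_multichoose_eq_ascPochhammer,
    Polynomial.ascPochhammer_smeval_eq_eval]

theorem succ_mul_multichoose_succ {K : Type*} [Field K] [CharZero K] (r : K) (n : ℕ) :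
    (n + 1) * multichoose r (n + 1) = (r + n) * multichoose r n := by
  have h := factorial_mul_multichoose r (n + 1)
  rw [ascPochhammer_succ_eval, ← factorial_mul_multichoose, Nat.factorial_succ] at h
  push_cast at h
  apply mul_left_cancel₀ (Nat.cast_ne_zero.mpr n.factorial_ne_zero : (n.factorial : K) ≠ 0)
  linear_combination h

end Ring

theorem Nat.cast_centralBinom_eq_four_pow_mul_multichoose {K : Type*} [Field K] [CharZero K]
    (n : ℕ) :
    (centralBinom n : K) = 4 ^ n * Ring.multichoose (1 / 2 : K) n := by
  induction n with
  | zero => simp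
  | succ n ih =>
    have h := congrArg (Nat.cast : ℕ → K) (succ_mul_centralBinom_succ n)
    have hm := Ring.succ_mul_multichoose_succ (1 / 2 : K) n
    push_cast at h
    apply mul_left_cancel₀ (n.cast_add_one_ne_zero : (n + 1 : K) ≠ 0)
    rw [h, ih]
    linear_combination -(4 : K) ^ (n + 1) * hm

theorem Real.Gamma_add_nat_eq_ascPochhammer_mul {c : ℝ} (hc : ∀ k : ℕ, c + k ≠ 0) (n : ℕ) :
    Real.Gamma (c + n) = (ascPochhammer ℝ n).eval c * Real.Gamma c := by
  induction n with
  | zero => simp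
  | succ n ih =>
    rw [Nat.cast_succ, ← add_assoc, Real.Gamma_add_one (hc n), ih, ascPochhammer_succ_eval]
    ring

theorem Real.Gamma_nat_add_div_eq_multichoose {c : ℝ} (hc : 0 < c) (n : ℕ) :
    Real.Gamma (n + c) / (Real.Gamma (n + 1) * Real.Gamma c) = Ring.multichoose c n := by
  have hΓ : Real.Gamma c ≠ 0 := (Real.Gamma_pos_of_pos hc).ne'
  rw [add_comm, Real.Gamma_add_nat_eq_ascPochhammer_mul (fun k => by positivity),
    Real.Gamma_nat_eq_factorial, ← Ring.factorial_mul_multichoose]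
  field_simp

theorem mem_grid {d m : ℕ} {k : Fin d → ℕ} : k ∈ grid d m ↔ ∑ i, k i ≤ m := by
  simp only [grid, mem_filter, mem_Icc, and_iff_right_iff_imp]
  exact fun h => ⟨fun _ => Nat.zero_le _,
    fun i => (single_le_sum (fun j _ => Nat.zero_le (k j)) (mem_univ i)).trans h⟩

theorem grid_zero (m : ℕ) : grid 0 m = {![]} := by
  ext k
  simp [mem_grid, Subsingleton.elim k ![]]

theorem sum_grid_succ {M : Type*} [AddCommMonoid M] (d m : ℕ) (F : (Fin (d + 1) → ℕ) → M) :
    ∑ k ∈ grid (d + 1) m, F k =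
      ∑ p ∈ antidiagonal m, ∑ k ∈ grid d p.2, F (Fin.cons p.1 k) := by
  rw [Nat.sum_antidiagonal_eq_sum_range_succ_mk, sum_sigma']
  refine sum_nbij' (fun k => ⟨k 0, Fin.tail k⟩) (fun p => Fin.cons p.1 p.2) ?_ ?_
    (fun k _ => Fin.cons_self_tail k) (fun p _ => by simp) (fun k _ => by rw [Fin.cons_self_tail])
  · intro k hk
    simp only [mem_sigma, mem_range, mem_grid] at hk ⊢
    rw [Fin.sum_univ_succ] at hk
    exact ⟨by omega, by simp only [Fin.tail]; omega⟩
  · intro p hp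
    simp only [mem_sigma, mem_range, mem_grid] at hp ⊢
    rw [Fin.sum_cons]
    omega

theorem sum_grid_prod_mul_eq_nsmul_add {M S : Type*} [AddMonoid M] [CommSemiring S] (a : M → ℕ → S)
    (ha : ∀ b c n, a (b + c) n = ∑ p ∈ antidiagonal n, a b p.1 * a c p.2) (b c : M) (d r : ℕ) :
    ∑ k ∈ grid d r, (∏ i, a b (k i)) * a c (r - ∑ i, k i) = a (d • b + c) r := by
  induction d generalizing r with
  | zero => simp [grid_zero]
  | succ d ih =>
    rw [sum_grid_succ, succ_nsmul', add_assoc, ha]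
    refine sum_congr rfl fun p hp => ?_
    rw [← ih, mul_sum]
    refine sum_congr rfl fun k _ => ?_
    have hr : r - ∑ i, (Fin.cons p.1 k : Fin (d + 1) → ℕ) i = p.2 - ∑ i, k i := by
      rw [Fin.sum_cons, ← mem_antidiagonal.mp hp]; omega
    rw [hr, Fin.prod_univ_succ]
    simp only [Fin.cons_zero, Fin.cons_succ, mul_assoc]

theorem central_binomial_simplex_sum_general (d r : ℕ) :
    (∑ k ∈ grid d r,
      ((∏ i, Nat.choose (2 * k i) (k i)) *
        Nat.choose (2 * (r - ∑ i, k i)) (r - ∑ i, k i) : ℕ) : ℝ) =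
      Real.Gamma (r + (d + 1) / 2) /
        (Real.Gamma (r + 1) * Real.Gamma ((d + 1) / 2)) * 4 ^ r := by
  have hsum := sum_grid_prod_mul_eq_nsmul_add (fun c n => (4 : ℝ) ^ n * Ring.multichoose c n)
    (Ring.pow_mul_multichoose_add 4) (1 / 2) (1 / 2) d r
  rw [Real.Gamma_nat_add_div_eq_multichoose (by positivity)]
  push_cast
  simp only [← Nat.centralBinom_eq_two_mul_choose,
    Nat.cast_centralBinom_eq_four_pow_mul_multichoose]
  rw [hsum, nsmul_eq_mul]
  ring_nf

/-- Chu–Vandermonde type identity for central binomial coefficients over the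
discrete simplex, with `k_{d+1} = r - ‖k‖₁` and the generalized binomial
coefficient interpreted via the Gamma function. -/
theorem central_binomial_simplex_sum (d r : ℕ) (hd : 1 ≤ d) :
    (∑ k ∈ grid d r,
      ((∏ i, Nat.choose (2 * k i) (k i)) *
        Nat.choose (2 * (r - ∑ i, k i)) (r - ∑ i, k i) : ℕ) : ℝ) =
      Real.Gamma (r + (d + 1) / 2) /
        (Real.Gamma (r + 1) * Real.Gamma ((d + 1) / 2)) * 4 ^ r :=
  central_binomial_simplex_sum_general d r
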